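/- There is an absolute constant κ > 0 with the following property. For every integer n ≥ 2, every real c ≥ 1 such that t := c·(ln n)/n ≤ 1, every real δ with 0 < δ ≤ 1, and all natural numbers m_p and x with m_p ≤ n, m_p − n/c ≤ x ≤ m_p, and δ·n ≤ x, the following holds. Let B be a binomial random variable with x trials and success probability t, and let M = (n/(c·ln n))·B. Then Pr[|M − m_p| ≥ δ·n + n/c] ≤ 2·n^{−κ·δ²·c·n/m_p}. -/

import Mathlib

/-!
Since `t · n / (c ln n) = 1`, the estimator `M` is `B / t`, so an error of `δ n + n / c` in `M`
around `m_p` forces an error of `δ n t` in `B` around `m_p t`, hence (as `0 ≤ m_p - x ≤ n / c`) an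
error of `s = δ n t` around the mean `μ = x t`. The two-sided Chernoff bound `2 exp (-s² / (4 μ))`
with `μ ≤ m_p t` gives `2 exp (-δ² n c ln n / (4 m_p)) = 2 n ^ (-δ² c n / (4 m_p))`, i.e. `κ = 1/4`.
-/

open Finset

/-- The probability that a binomial random variable with `N` trials and
success probability `t` takes the value `k`. -/
noncomputable def binomPMF (N : ℕ) (t : ℝ) (k : ℕ) : ℝ :=
  (N.choose k : ℝ) * t ^ k * (1 - t) ^ (N - k)

lemma binomPMF_nonneg {N : ℕ} {t : ℝ} (ht0 : 0 ≤ t) (ht1 : t ≤ 1) (k : ℕ) :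
    0 ≤ binomPMF N t k := by
  have : 0 ≤ 1 - t := by linarith
  unfold binomPMF
  positivity

lemma sum_binomPMF_mul_exp (N : ℕ) (t l : ℝ) :
    ∑ k ∈ range (N + 1), binomPMF N t k * Real.exp (l * k) = (t * Real.exp l + (1 - t)) ^ N := by
  rw [add_pow]
  refine sum_congr rfl fun k _ => ?_
  rw [binomPMF, mul_pow, ← Real.exp_nat_mul]
  ring_nf

lemma binomial_mgf_le_exp {t : ℝ} (ht0 : 0 ≤ t) (ht1 : t ≤ 1) (N : ℕ) (l : ℝ) :
    (t * Real.exp l + (1 - t)) ^ N ≤ Real.exp (N * t * (Real.exp l - 1)) := by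
  have hbase : 0 ≤ t * Real.exp l + (1 - t) := by
    have := mul_nonneg ht0 (Real.exp_pos l).le
    linarith
  calc (t * Real.exp l + (1 - t)) ^ N ≤ Real.exp (t * (Real.exp l - 1)) ^ N := by
        gcongr
        linarith [Real.add_one_le_exp (t * (Real.exp l - 1))]
    _ = Real.exp (N * t * (Real.exp l - 1)) := by rw [← Real.exp_nat_mul, mul_assoc]

lemma ite_le_ite_of_imp {P Q : Prop} [Decidable P] [Decidable Q] {a : ℝ} (ha : 0 ≤ a)
    (h : P → Q) : (if P then a else 0) ≤ if Q then a else 0 := by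
  split_ifs <;> first | exact le_rfl | exact ha | tauto

lemma ite_le_ite_add_ite_of_imp_or {P Q R : Prop} [Decidable P] [Decidable Q] [Decidable R]
    {a : ℝ} (ha : 0 ≤ a) (h : P → Q ∨ R) :
    (if P then a else 0) ≤ (if Q then a else 0) + if R then a else 0 := by
  split_ifs <;> first | linarith | tauto

/-- Exponential Markov inequality, through the moment generating function. -/
lemma sum_binomPMF_ite_le_exp {t : ℝ} (ht0 : 0 ≤ t) (ht1 : t ≤ 1) (N : ℕ) (l a : ℝ) :
    ∑ k ∈ range (N + 1), (if a ≤ l * k then binomPMF N t k else 0)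
      ≤ Real.exp (N * t * (Real.exp l - 1) - a) := by
  calc ∑ k ∈ range (N + 1), (if a ≤ l * k then binomPMF N t k else 0)
      ≤ ∑ k ∈ range (N + 1), binomPMF N t k * Real.exp (l * k - a) := by
        refine sum_le_sum fun k _ => ?_
        have hp := binomPMF_nonneg ht0 ht1 (N := N) k
        split_ifs with h
        · exact le_mul_of_one_le_right hp (Real.one_le_exp (by linarith))
        · positivity
    _ = Real.exp (-a) * (t * Real.exp l + (1 - t)) ^ N := by
        rw [← sum_binomPMF_mul_exp, mul_sum]
        refine sum_congr rfl fun k _ => ?_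
        rw [sub_eq_add_neg, Real.exp_add]
        ring
    _ ≤ Real.exp (-a) * Real.exp (N * t * (Real.exp l - 1)) := by
        gcongr
        exact binomial_mgf_le_exp ht0 ht1 N l
    _ = Real.exp (N * t * (Real.exp l - 1) - a) := by
        rw [← Real.exp_add]
        ring_nf

lemma sum_binomPMF_ite_abs_sub_le_chernoff {t : ℝ} (ht0 : 0 ≤ t) (ht1 : t ≤ 1) (N : ℕ) {s : ℝ}
    (hs : 0 < s) (hsμ : s ≤ 2 * (N * t)) :
    ∑ k ∈ range (N + 1), (if s ≤ |(k : ℝ) - N * t| then binomPMF N t k else 0)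
      ≤ 2 * Real.exp (-(s ^ 2 / (4 * (N * t)))) := by
  set μ : ℝ := N * t
  have hμ : 0 < μ := by linarith
  -- `l` minimizes `μ l² - s l`; the upper (`ε = 1`) and lower (`ε = -1`) tails are both bounded
  -- by `exp (μ l² - s l)` through `exp (ε l) - 1 ≤ ε l + l²`.
  set l : ℝ := s / (2 * μ)
  have hl : |l| ≤ 1 := by
    rw [abs_of_pos (by positivity), div_le_one (by positivity)]
    exact hsμ
  have hexp (ε : ℝ) (hε : |ε| = 1) : Real.exp (ε * l) - 1 ≤ ε * l + l ^ 2 := by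
    have hεl : |ε * l| ≤ 1 := by rwa [abs_mul, hε, one_mul]
    have := (abs_le.mp (Real.abs_exp_sub_one_sub_id_le hεl)).2
    rw [mul_pow, ← sq_abs ε, hε, one_pow, one_mul] at this
    linarith
  have htail (ε : ℝ) (hε : |ε| = 1) :
      ∑ k ∈ range (N + 1), (if ε * l * μ + l * s ≤ ε * l * k then binomPMF N t k else 0)
        ≤ Real.exp (-(s ^ 2 / (4 * μ))) := by
    refine (sum_binomPMF_ite_le_exp ht0 ht1 N _ _).trans (Real.exp_le_exp.mpr ?_)
    have := mul_le_mul_of_nonneg_left (hexp ε hε) hμ.le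
    have hval : μ * (ε * l + l ^ 2) - (ε * l * μ + l * s) = -(s ^ 2 / (4 * μ)) := by
      simp only [l]
      field_simp
      ring
    linarith
  calc ∑ k ∈ range (N + 1), (if s ≤ |(k : ℝ) - μ| then binomPMF N t k else 0)
      ≤ ∑ k ∈ range (N + 1), ((if 1 * l * μ + l * s ≤ 1 * l * k then binomPMF N t k else 0)
          + if -1 * l * μ + l * s ≤ -1 * l * k then binomPMF N t k else 0) := by
        refine sum_le_sum fun k _ => ite_le_ite_add_ite_of_imp_or (binomPMF_nonneg ht0 ht1 k) ?_
        intro h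
        have hl0 : 0 < l := by positivity
        rcases le_abs'.mp h with h | h
        · right; nlinarith
        · left; nlinarith
    _ ≤ 2 * Real.exp (-(s ^ 2 / (4 * μ))) := by
        rw [sum_add_distrib, two_mul]
        exact add_le_add (htail 1 (by simp)) (htail (-1) (by simp))

/-- There is an absolute constant `κ > 0` such that for every `n ≥ 2`,
`c ≥ 1` with `t := c * ln n / n ≤ 1`, `0 < δ ≤ 1` and naturals `m_p`, `x`
with `m_p ≤ n`, `m_p - n / c ≤ x ≤ m_p` and `δ * n ≤ x`, if `B` is a
binomial random variable with `x` trials and success probability `t` and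
`M = (n / (c * ln n)) * B`, then
`Pr[|M - m_p| ≥ δ * n + n / c] ≤ 2 * n ^ (-κ * δ² * c * n / m_p)`. -/
theorem binomial_estimator_absolute_error :
    ∃ κ : ℝ, 0 < κ ∧
      ∀ n : ℕ, 2 ≤ n →
      ∀ c : ℝ, 1 ≤ c → c * Real.log n / n ≤ 1 →
      ∀ δ : ℝ, 0 < δ → δ ≤ 1 →
      ∀ mp x : ℕ, mp ≤ n → (mp : ℝ) - n / c ≤ x → x ≤ mp → δ * n ≤ x →
        (∑ k ∈ Finset.range (x + 1),
            if δ * n + n / c ≤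
                |((n : ℝ) / (c * Real.log n)) * k - mp| then
              binomPMF x (c * Real.log n / n) k
            else 0)
          ≤ 2 * (n : ℝ) ^ (-(κ * δ ^ 2 * c * n / mp)) := by
  refine ⟨1 / 4, by norm_num, ?_⟩
  intro n hn c hc ht1 δ hδ _ mp x _ hxlo hxmp hδx
  have hn0 : (0 : ℝ) < n := by positivity
  have hlog : 0 < Real.log n := Real.log_pos (by exact_mod_cast hn)
  set t : ℝ := c * Real.log n / n
  have ht0 : 0 < t := by positivity
  have hxmp' : (x : ℝ) ≤ mp := by exact_mod_cast hxmp
  have hx0 : (0 : ℝ) < x := lt_of_lt_of_le (by positivity) hδx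
  have hevent (k : ℕ) (h : δ * n + n / c ≤ |((n : ℝ) / (c * Real.log n)) * k - mp|) :
      δ * n * t ≤ |(k : ℝ) - x * t| := by
    have hk : ((n : ℝ) / (c * Real.log n)) * k - mp = ((k : ℝ) - mp * t) / t := by
      simp only [t]
      field_simp
    rw [hk, abs_div, abs_of_pos ht0, le_div_iff₀ ht0] at h
    have hgap : |(x : ℝ) * t - mp * t| ≤ n / c * t := by
      rw [abs_le]
      constructor <;> nlinarith
    have htriangle := abs_sub_abs_le_abs_sub ((k : ℝ) - mp * t) ((x : ℝ) * t - mp * t)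
    rw [sub_sub_sub_cancel_right] at htriangle
    linarith [add_mul (δ * n) (n / c) t]
  calc _ ≤ ∑ k ∈ range (x + 1), (if δ * n * t ≤ |(k : ℝ) - x * t| then binomPMF x t k else 0) :=
        sum_le_sum fun k _ =>
          ite_le_ite_of_imp (binomPMF_nonneg ht0.le ht1 k) (hevent k)
    _ ≤ 2 * Real.exp (-((δ * n * t) ^ 2 / (4 * (x * t)))) :=
        sum_binomPMF_ite_abs_sub_le_chernoff ht0.le ht1 x (by positivity) (by nlinarith)
    _ ≤ 2 * Real.exp (-((δ * n * t) ^ 2 / (4 * (mp * t)))) := by gcongr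
    _ = 2 * (n : ℝ) ^ (-(1 / 4 * δ ^ 2 * c * n / mp)) := by
        rw [Real.rpow_def_of_pos hn0]
        congr 2
        simp only [t]
        field_simp
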